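/- Let (R,m) be a regular local ring, let p = xR be a principal prime ideal of R, and let q be a prime ideal of R with x ∉ q. Then for all positive integers m and n, p^{(m)} ∩ q^{(n)} = p^m q^{(n)}; in particular p^{(m)} ∩ q^{(n)} ⊆ m^{m+n} whenever q^{(n)} ⊆ m^n. -/

import Mathlib

open IsLocalRing

/-- The length of an `R`-module `M`, defined as the Krull dimension of its lattice of
submodules (i.e. the supremum of lengths of strictly increasing chains of submodules),
truncated to a natural number. -/
noncomputable def moduleLength (R M : Type*) [Ring R] [AddCommGroup M] [Module R M] : ℕ :=
  (WithBot.unbotD 0 (Order.krullDim (Submodule R M))).toNat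

open Classical in
/-- The Hilbert–Samuel multiplicity `e_R(I, M)`: `d!` times the leading coefficient of the
polynomial that agrees with `t ↦ length_R (M / I^(t+1) M)` for all large `t`, where
`d = dim (R / ann M)` is the dimension of `M`. -/
noncomputable def hilbertSamuelMultiplicity (R : Type*) [CommRing R] (I : Ideal R)
    (M : Type*) [AddCommGroup M] [Module R M] : ℚ :=
  if h : ∃ p : Polynomial ℚ, ∀ᶠ t : ℕ in Filter.atTop,
      p.eval (t : ℚ) = moduleLength R (M ⧸ (I ^ (t + 1) • ⊤ : Submodule R M))
  then ((ENat.toNat (WithBot.unbotD 0 (ringKrullDim (R ⧸ Module.annihilator R M)))).factorial : ℚ) *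
      h.choose.leadingCoeff
  else 0

/-- The Hilbert–Samuel multiplicity `e(A)` of a local ring `A` (with maximal ideal
`IsLocalRing.maximalIdeal A`). -/
noncomputable def eMult (A : Type*) [CommRing A] [IsLocalRing A] : ℚ :=
  hilbertSamuelMultiplicity A (maximalIdeal A) A

/-- `e(A_P)`: the Hilbert–Samuel multiplicity of the localization of `A` at a prime `P`. -/
noncomputable def eLocal (A : Type*) [CommRing A] (P : Ideal A) (hP : P.IsPrime) : ℚ :=
  letI := hP
  eMult (Localization.AtPrime P)

/-- The contraction `(I^n A_P) ∩ A` of the `n`-th power of `I` in the localization at the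
prime `P`, i.e. the preimage under `A → A_P`. -/
noncomputable def contractedPow {A : Type*} [CommRing A] (I P : Ideal A) (hP : P.IsPrime)
    (n : ℕ) : Ideal A :=
  letI := hP
  (Ideal.map (algebraMap A (Localization.AtPrime P)) I ^ n).comap
    (algebraMap A (Localization.AtPrime P))

/-- The `m`-th symbolic power `p^(m) = p^m A_p ∩ A` of a prime ideal `p`. -/
noncomputable def symbolicPower {A : Type*} [CommRing A] (p : Ideal A) (hp : p.IsPrime)
    (m : ℕ) : Ideal A :=
  contractedPow p p hp m

/-- A Noetherian local ring is regular if its maximal ideal can be generated by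
`dim R` elements. -/
def IsRegularLocal (R : Type*) [CommRing R] : Prop :=
  ∃ (_ : IsNoetherianRing R) (h : IsLocalRing R) (s : Finset R),
    (s.card : WithBot ℕ∞) = ringKrullDim R ∧
    Ideal.span (s : Set R) = @IsLocalRing.maximalIdeal R _ h

/-- A ring is equidimensional if `dim (A / I) = dim A` for every minimal prime `I` of `A`. -/
def RingEquidimensional (A : Type*) [CommRing A] : Prop :=
  ∀ I ∈ minimalPrimes A, ringKrullDim (A ⧸ I) = ringKrullDim A

/-- A local ring is quasi-unmixed if its completion is equidimensional. -/
def QuasiUnmixed (A : Type*) [CommRing A] [IsLocalRing A] : Prop :=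
  RingEquidimensional (AdicCompletion (maximalIdeal A) A)

/-- A ring is analytically unramified along an ideal `n` (for a local ring, its maximal
ideal) if the `n`-adic completion is reduced. -/
def AnalyticallyUnramified {A : Type*} [CommRing A] (n : Ideal A) : Prop :=
  IsReduced (AdicCompletion n A)

/-!
A regular local ring is a domain: if `dim R > 0`, prime avoidance gives `x ∈ 𝔪 \ 𝔪²` outside
every minimal prime; `R ⧸ (x)` is again regular of smaller embedding dimension, hence a domain
by induction, so `(x)` is prime, and Nakayama forces the minimal prime below `(x)` to be zero.
In a domain, `(x)^m` is `(x)`-primary, so `p^(m) = p^m`. Finally `q^(n)` is saturated with respect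
to elements outside `q`, so `x^m b ∈ q^(n)` with `x ∉ q` gives `b ∈ q^(n)`.
-/

open Ideal

section LocalRing

variable {R : Type*} [CommRing R] [IsLocalRing R]

theorem exists_span_insert_diff_singleton_eq {s : Finset R} {x : R}
    (hx : x ∈ span (s : Set R)) (hx' : x ∉ maximalIdeal R * span (s : Set R)) :
    ∃ i ∈ s, span (insert x ((s : Set R) \ {i})) = span (s : Set R) := by
  classical
  obtain ⟨f, -, rfl⟩ := Submodule.mem_span_finset.mp hx
  obtain ⟨i, hi, hunit⟩ : ∃ i ∈ s, IsUnit (f i) := by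
    by_contra! h
    exact hx' (sum_mem fun j hj => mul_mem_mul (h j hj) (subset_span hj))
  refine ⟨i, hi, le_antisymm (span_le.mpr ?_) (span_le.mpr fun j hj => ?_)⟩
  · rintro y (rfl | hy)
    · exact sum_mem fun j hj => mul_mem_left _ _ (subset_span hj)
    · exact subset_span hy.1
  · by_cases hji : j = i
    · subst hji
      rw [SetLike.mem_coe, ← unit_mul_mem_iff_mem _ hunit, ← smul_eq_mul,
        ← add_sub_cancel_right (f j • j) (∑ k ∈ s.erase j, f k • k),
        Finset.add_sum_erase s (fun k => f k • k) hi]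
      refine sub_mem (subset_span (Set.mem_insert _ _)) (sum_mem fun k hk => ?_)
      obtain ⟨hkj, hk⟩ := Finset.mem_erase.mp hk
      exact mul_mem_left _ _ (subset_span (Set.mem_insert_of_mem _ ⟨hk, hkj⟩))
    · exact subset_span (Set.mem_insert_of_mem _ ⟨hj, hji⟩)

variable [IsNoetherianRing R]

theorem exists_mem_maximalIdeal_notMem_sq_notMem_minimalPrimes
    (h : maximalIdeal R ∉ minimalPrimes R) :
    ∃ x ∈ maximalIdeal R, x ∉ maximalIdeal R ^ 2 ∧ ∀ P ∈ minimalPrimes R, x ∉ P := by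
  classical
  have hfin := minimalPrimes.finite_of_isNoetherianRing R
  have hprime : ∀ P ∈ insert (maximalIdeal R ^ 2) hfin.toFinset,
      P ≠ maximalIdeal R ^ 2 → P ≠ maximalIdeal R ^ 2 → (id P).IsPrime := fun P hP hP2 _ =>
    (hfin.mem_toFinset.mp ((Finset.mem_insert.mp hP).resolve_left hP2)).1.1
  have hmin_le : ∀ P ∈ minimalPrimes R, ¬ maximalIdeal R ≤ P := fun P hP hle =>
    h (le_antisymm (le_maximalIdeal hP.1.1.ne_top) hle ▸ hP)
  have hnot := (subset_union_prime (I := maximalIdeal R) _ _ hprime).not.mpr (by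
    rintro ⟨P, hP, hle⟩
    rcases Finset.mem_insert.mp hP with rfl | hP
    · have hbot : maximalIdeal R = ⊥ :=
        Submodule.eq_bot_of_le_smul_of_le_jacobson_bot _ _ (IsNoetherian.noetherian _)
          (by simpa [pow_two] using hle) (jacobson_eq_maximalIdeal ⊥ bot_ne_top).ge
      obtain ⟨P, hP, -⟩ := exists_minimalPrimes_le (J := maximalIdeal R) bot_le
      exact hmin_le P hP (hbot ▸ bot_le)
    · exact hmin_le P (hfin.mem_toFinset.mp hP) hle)
  obtain ⟨x, hx, hxU⟩ := Set.not_subset.mp hnot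
  simp only [Finset.coe_insert, Set.Finite.coe_toFinset, Set.mem_insert_iff,
    Set.iUnion_iUnion_eq_or_left, Set.mem_union, Set.mem_iUnion, not_or, not_exists] at hxU
  exact ⟨x, hx, hxU.1, hxU.2⟩

theorem isDomain_of_isPrime_span_singleton {x : R} (hx : x ∈ maximalIdeal R)
    [(span {x}).IsPrime] (hmin : ∀ P ∈ minimalPrimes R, x ∉ P) : IsDomain R := by
  obtain ⟨P, hP, hPx⟩ := exists_minimalPrimes_le (J := span {x}) bot_le
  have hP_le : P ≤ span {x} • P := fun y hy => by
    rw [smul_eq_mul]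
    obtain ⟨z, rfl⟩ := mem_span_singleton.mp (hPx hy)
    have hz : z ∈ P := (hP.1.1.mem_or_mem hy).resolve_left (hmin P hP)
    exact mul_mem_mul (mem_span_singleton_self x) hz
  have hPbot : P = ⊥ := Submodule.eq_bot_of_le_smul_of_le_jacobson_bot _ _
    (IsNoetherian.noetherian _) hP_le
    ((span_singleton_le_iff_mem _).mpr hx |>.trans (jacobson_eq_maximalIdeal ⊥ bot_ne_top).ge)
  have : (⊥ : Ideal R).IsPrime := hPbot ▸ hP.1.1
  exact IsDomain.of_bot_isPrime R

theorem spanFinrank_maximalIdeal_quotient_lt {x : R} (hx : x ∈ maximalIdeal R)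
    (hx2 : x ∉ maximalIdeal R ^ 2) [IsLocalRing (R ⧸ span {x})] :
    (maximalIdeal (R ⧸ span {x})).spanFinrank < (maximalIdeal R).spanFinrank := by
  obtain ⟨s, hs_card, hs_span⟩ :=
    Submodule.FG.exists_span_finset_card_eq_spanFinrank (IsNoetherian.noetherian (maximalIdeal R))
  change span (s : Set R) = _ at hs_span
  obtain ⟨i, hi, hspan⟩ := exists_span_insert_diff_singleton_eq (hs_span ▸ hx)
    (by rwa [hs_span, ← pow_two])
  have hmap : span (Ideal.Quotient.mk (span {x}) '' ((s : Set R) \ {i})) =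
      maximalIdeal (R ⧸ span {x}) := by
    rw [← map_maximalIdeal_of_surjective _ Ideal.Quotient.mk_surjective, ← hs_span, ← hspan,
      map_span, Set.image_insert_eq, Quotient.eq_zero_iff_mem.mpr (mem_span_singleton_self x),
      span_insert_zero]
  calc (maximalIdeal (R ⧸ span {x})).spanFinrank
      ≤ (Ideal.Quotient.mk (span {x}) '' ((s : Set R) \ {i})).ncard := by
        rw [← hmap]
        exact Submodule.spanFinrank_span_le_ncard_of_finite ((s.finite_toSet.sdiff).image _)
    _ ≤ ((s : Set R) \ {i}).ncard := Set.ncard_image_le s.finite_toSet.sdiff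
    _ < s.card := by
        rw [Set.ncard_sdiff_singleton_of_mem hi, Set.ncard_coe_finset]
        exact Nat.sub_lt (s.card_pos.mpr ⟨i, hi⟩) one_pos
    _ = (maximalIdeal R).spanFinrank := hs_card

end LocalRing

namespace IsRegularLocalRing

variable {R : Type*} [CommRing R] [IsRegularLocalRing R]

theorem quotient_span_singleton_of_notMem_sq {x : R} (hx : x ∈ maximalIdeal R)
    (hx2 : x ∉ maximalIdeal R ^ 2) [IsLocalRing (R ⧸ span {x})] :
    IsRegularLocalRing (R ⧸ span {x}) := by
  refine .of_spanFinrank_maximalIdeal_le _ ?_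
  have hdim := ringKrullDim_le_ringKrullDim_quotient_add_card {x}
    (by simpa [ringJacobson_eq_maximalIdeal] using hx)
  rw [← spanFinrank_maximalIdeal, Finset.coe_singleton, Finset.card_singleton] at hdim
  have hlt : ((_ + 1 : ℕ) : WithBot ℕ∞) ≤ _ :=
    Nat.cast_le.mpr (spanFinrank_maximalIdeal_quotient_lt hx hx2)
  rw [Nat.cast_add] at hlt
  exact ENat.WithBot.add_le_add_natCast_right_iff.mp (hlt.trans hdim)

instance isDomain : IsDomain R := by
  induction h : (maximalIdeal R).spanFinrank using Nat.strong_induction_on generalizing R with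
  | _ d ih =>
  rcases Nat.eq_zero_or_pos d with rfl | hd
  · exact (isField_iff_maximalIdeal_eq.mpr
      ((Submodule.spanFinrank_eq_zero_iff_eq_bot (IsNoetherian.noetherian _)).mp h)).isDomain
  have hm : maximalIdeal R ∉ minimalPrimes R := by
    rw [← height_eq_zero_iff]
    intro h0
    have := maximalIdeal_height_eq_ringKrullDim (R := R)
    rw [h0, ← spanFinrank_maximalIdeal, h] at this
    exact hd.ne' (by exact_mod_cast this.symm)
  obtain ⟨x, hxm, hx2, hxmin⟩ := exists_mem_maximalIdeal_notMem_sq_notMem_minimalPrimes hm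
  have : Nontrivial (R ⧸ span {x}) := Quotient.nontrivial_iff.mpr <|
    ne_top_of_le_ne_top (maximalIdeal.isMaximal R).ne_top ((span_singleton_le_iff_mem _).mpr hxm)
  have : IsLocalRing (R ⧸ span {x}) := .of_surjective' _ Ideal.Quotient.mk_surjective
  have := quotient_span_singleton_of_notMem_sq hxm hx2
  have : IsDomain (R ⧸ span {x}) := ih _ (h ▸ spanFinrank_maximalIdeal_quotient_lt hxm hx2) rfl
  have := (Quotient.isDomain_iff_prime _).mp this
  exact isDomain_of_isPrime_span_singleton hxm hxmin

end IsRegularLocalRing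

section SymbolicPower

variable {R : Type*} [CommRing R] {q : Ideal R}

theorem mem_symbolicPower_iff (hq : q.IsPrime) {n : ℕ} {a : R} :
    a ∈ symbolicPower q hq n ↔ ∃ t ∉ q, t * a ∈ q ^ n := by
  rw [symbolicPower, contractedPow, mem_comap, ← Ideal.map_pow,
    IsLocalization.algebraMap_mem_map_algebraMap_iff q.primeCompl]
  rfl

theorem mem_symbolicPower_of_mul_mem (hq : q.IsPrime) {n : ℕ} {t a : R} (ht : t ∉ q)
    (h : t * a ∈ symbolicPower q hq n) : a ∈ symbolicPower q hq n := by
  obtain ⟨u, hu, hua⟩ := (mem_symbolicPower_iff hq).mp h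
  exact (mem_symbolicPower_iff hq).mpr ⟨u * t, hq.mul_notMem hu ht, mul_assoc u t a ▸ hua⟩

theorem span_singleton_inf_symbolicPower (hq : q.IsPrime) {x : R} (hx : x ∉ q) (n : ℕ) :
    span {x} ⊓ symbolicPower q hq n = span {x} * symbolicPower q hq n := by
  refine le_antisymm (fun a ⟨hax, haq⟩ => ?_) mul_le_inf
  obtain ⟨b, rfl⟩ := mem_span_singleton.mp hax
  exact mul_mem_mul (mem_span_singleton_self x) (mem_symbolicPower_of_mul_mem hq hx haq)

theorem symbolicPower_span_singleton [IsDomain R] {x : R} (hp : (span {x}).IsPrime) (m : ℕ) :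
    symbolicPower (span {x}) hp m = span {x} ^ m := by
  refine le_antisymm (fun a ha => ?_) fun a ha => (mem_symbolicPower_iff hp).mpr
    ⟨1, (ne_top_iff_one _).mp hp.ne_top, by rwa [one_mul]⟩
  obtain ⟨t, ht, hta⟩ := (mem_symbolicPower_iff hp).mp ha
  rw [span_singleton_pow, mem_span_singleton] at hta ⊢
  rw [mem_span_singleton] at ht
  rcases eq_or_ne x 0 with rfl | hx0
  · rcases m.eq_zero_or_pos with rfl | hm
    · exact pow_zero (0 : R) ▸ one_dvd a
    · rw [zero_pow hm.ne', zero_dvd_iff] at hta ⊢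
      exact (mul_eq_zero.mp hta).resolve_left (by simpa using ht)
  · exact ((span_singleton_prime hx0).mp hp).pow_dvd_of_dvd_mul_left m ht hta

end SymbolicPower

theorem statement12_general (R : Type*) [CommRing R] [IsLocalRing R] [IsNoetherianRing R]
    (hreg : ∃ s : Finset R, (s.card : WithBot ℕ∞) = ringKrullDim R ∧
      Ideal.span (s : Set R) = IsLocalRing.maximalIdeal R)
    (x : R) (p q : Ideal R) (hpdef : p = Ideal.span {x})
    (hp : p.IsPrime) (hq : q.IsPrime) (hx : x ∉ q)
    (m n : ℕ) :
    symbolicPower p hp m ⊓ symbolicPower q hq n = p ^ m * symbolicPower q hq n ∧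
    (symbolicPower q hq n ≤ IsLocalRing.maximalIdeal R ^ n →
      symbolicPower p hp m ⊓ symbolicPower q hq n ≤
        IsLocalRing.maximalIdeal R ^ (m + n)) := by
  obtain ⟨s, hs_card, hs_span⟩ := hreg
  have : IsRegularLocalRing R := .of_spanFinrank_maximalIdeal_le R <| by
    rw [← hs_card, ← hs_span, ← Set.ncard_coe_finset]
    exact_mod_cast Submodule.spanFinrank_span_le_ncard_of_finite s.finite_toSet
  subst hpdef
  have hinf : symbolicPower (span {x}) hp m ⊓ symbolicPower q hq n =
      span {x} ^ m * symbolicPower q hq n := by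
    rw [symbolicPower_span_singleton, span_singleton_pow,
      span_singleton_inf_symbolicPower hq fun h => hx (hq.mem_of_pow_mem m h)]
  refine ⟨hinf, fun hqn => hinf ▸ ?_⟩
  calc span {x} ^ m * symbolicPower q hq n ≤ maximalIdeal R ^ m * maximalIdeal R ^ n :=
        mul_mono (pow_right_mono (le_maximalIdeal hp.ne_top) m) hqn
    _ = maximalIdeal R ^ (m + n) := (pow_add _ _ _).symm

/-- Let `(R, 𝔪)` be a regular local ring, `p = xR` a principal prime
ideal, and `q` a prime with `x ∉ q`.  Then for all positive integers `m`, `n`,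
`p^(m) ∩ q^(n) = p^m · q^(n)`; in particular `p^(m) ∩ q^(n) ⊆ 𝔪^(m+n)` whenever
`q^(n) ⊆ 𝔪^n`. -/
theorem statement12 (R : Type*) [CommRing R] [IsLocalRing R] [IsNoetherianRing R]
    (hreg : ∃ s : Finset R, (s.card : WithBot ℕ∞) = ringKrullDim R ∧
      Ideal.span (s : Set R) = IsLocalRing.maximalIdeal R)
    (x : R) (p q : Ideal R) (hpdef : p = Ideal.span {x})
    (hp : p.IsPrime) (hq : q.IsPrime) (hx : x ∉ q)
    (m n : ℕ) (hm : 0 < m) (hn : 0 < n) :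
    symbolicPower p hp m ⊓ symbolicPower q hq n = p ^ m * symbolicPower q hq n ∧
    (symbolicPower q hq n ≤ IsLocalRing.maximalIdeal R ^ n →
      symbolicPower p hp m ⊓ symbolicPower q hq n ≤
        IsLocalRing.maximalIdeal R ^ (m + n)) :=
  statement12_general R hreg x p q hpdef hp hq hx m n
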